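/- arXiv:2202.10391 — 7 statements merged into one kernel-verified Lean document; each statement's English description precedes it below -/
import Mathlib

section
/- Let μ be a Borel probability measure on ℝ with cumulative distribution function F(z) = μ((-∞, z]). If ∫ |z|^p dμ(z) < ∞ for some p > 2, then ∫_{-∞}^{∞} √(F(z)(1 − F(z))) dz < ∞. -/
open MeasureTheory

/-- If a Borel probability measure on ℝ has a finite moment of some order `p > 2`,
then `∫ √(F(z)(1 − F(z))) dz < ∞`, where `F(z) = μ((-∞, z])` is its CDF. -/
theorem cdf_sqrt_integral_finite (μ : Measure ℝ) [IsProbabilityMeasure μ]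
    (p : ℝ) (hp : 2 < p)
    (hmom : ∫⁻ z, ENNReal.ofReal (|z| ^ p) ∂μ < ⊤) :
    ∫⁻ z, ENNReal.ofReal
        (Real.sqrt ((μ (Set.Iic z)).toReal * (1 - (μ (Set.Iic z)).toReal))) < ⊤ := by
  have hp0 : 0 < p := by linarith
  set I := ∫⁻ z, ENNReal.ofReal (|z| ^ p) ∂μ with hIdef
  set M := I.toReal with hMdef
  have hM0 : 0 ≤ M := ENNReal.toReal_nonneg
  -- Markov inequality
  have markov : ∀ t : ℝ, 0 < t → (μ {x | t ≤ |x|}).toReal ≤ M / t ^ p := by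
    intro t ht
    have htp : 0 < t ^ p := Real.rpow_pos_of_pos ht p
    have hmeas : AEMeasurable (fun x : ℝ => ENNReal.ofReal (|x| ^ p)) μ := by
      fun_prop
    have h1 : ENNReal.ofReal (t ^ p) * μ {x | t ≤ |x|} ≤ I := by
      refine le_trans (mul_le_mul_right (measure_mono ?_) _)
        (mul_meas_ge_le_lintegral₀ hmeas _)
      intro x hx
      exact ENNReal.ofReal_le_ofReal (Real.rpow_le_rpow ht.le hx hp0.le)
    have h2 : μ {x | t ≤ |x|} ≤ I / ENNReal.ofReal (t ^ p) :=
      (ENNReal.le_div_iff_mul_le (Or.inl (by simpa using htp)) (Or.inl ENNReal.ofReal_ne_top)).2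
        (by rwa [mul_comm])
    have h3 : I / ENNReal.ofReal (t ^ p) < ⊤ :=
      ENNReal.div_lt_top hmom.ne (by simpa using htp)
    calc (μ {x | t ≤ |x|}).toReal ≤ (I / ENNReal.ofReal (t ^ p)).toReal :=
          ENNReal.toReal_mono h3.ne h2
      _ = M / t ^ p := by rw [ENNReal.toReal_div, ENNReal.toReal_ofReal htp.le]
  set F : ℝ → ℝ := fun z => (μ (Set.Iic z)).toReal with hFdef
  have hF0 : ∀ z, 0 ≤ F z := fun z => ENNReal.toReal_nonneg
  have hF1 : ∀ z, F z ≤ 1 := by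
    intro z
    have := prob_le_one (μ := μ) (s := Set.Iic z)
    simpa [F] using ENNReal.toReal_mono ENNReal.one_ne_top this
  -- tail bound for positive z
  have tail_pos : ∀ z : ℝ, 0 < z → 1 - F z ≤ M / z ^ p := by
    intro z hz
    have hc : μ (Set.Iic z)ᶜ = 1 - μ (Set.Iic z) := by
      rw [measure_compl measurableSet_Iic (measure_ne_top μ _), measure_univ]
    have h1F : 1 - F z = (μ (Set.Iic z)ᶜ).toReal := by
      rw [hc, ENNReal.toReal_sub_of_le (prob_le_one) ENNReal.one_ne_top]
      simp [F]
    rw [h1F]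
    refine le_trans ?_ (markov z hz)
    refine ENNReal.toReal_mono (measure_ne_top μ _) (measure_mono ?_)
    intro x hx
    simp only [Set.mem_compl_iff, Set.mem_Iic, not_le] at hx
    exact le_trans hx.le (le_abs_self x)
  have tail_neg : ∀ z : ℝ, z < 0 → F z ≤ M / (-z) ^ p := by
    intro z hz
    refine le_trans ?_ (markov (-z) (by linarith))
    refine ENNReal.toReal_mono (measure_ne_top μ _) (measure_mono ?_)
    intro x hx
    simp only [Set.mem_Iic] at hx
    simp only [Set.mem_setOf_eq]
    calc -z ≤ -x := by linarith
      _ ≤ |x| := neg_le_abs x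
  -- integrand and majorant
  set h : ℝ → ℝ := fun z => Real.sqrt (F z * (1 - F z)) with hhdef
  have hble1 : ∀ z, h z ≤ 1 := by
    intro z
    rw [show (1 : ℝ) = Real.sqrt 1 by simp]
    apply Real.sqrt_le_sqrt
    nlinarith [hF0 z, hF1 z]
  have sqrt_bound : ∀ z : ℝ, 0 < z → ∀ a : ℝ, 0 ≤ a → a ≤ M / z ^ p →
      Real.sqrt a ≤ Real.sqrt M * z ^ (-(p / 2)) := by
    intro z hz a _ ha
    have hzp : 0 < z ^ p := Real.rpow_pos_of_pos hz p
    calc Real.sqrt a ≤ Real.sqrt (M / z ^ p) := Real.sqrt_le_sqrt ha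
      _ = Real.sqrt M / Real.sqrt (z ^ p) := Real.sqrt_div hM0 _
      _ = Real.sqrt M * z ^ (-(p / 2)) := by
          have hsq : Real.sqrt (z ^ p) = z ^ (p / 2) := by
            rw [Real.sqrt_eq_rpow, ← Real.rpow_mul hz.le, mul_one_div]
          rw [hsq, Real.rpow_neg hz.le, div_eq_mul_inv]
  have hb_pos : ∀ z : ℝ, 0 < z → h z ≤ Real.sqrt M * z ^ (-(p / 2)) := by
    intro z hz
    refine sqrt_bound z hz _ (mul_nonneg (hF0 z) (by linarith [hF1 z])) ?_
    calc F z * (1 - F z) ≤ 1 * (1 - F z) :=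
          mul_le_mul_of_nonneg_right (hF1 z) (by linarith [hF1 z])
      _ = 1 - F z := one_mul _
      _ ≤ M / z ^ p := tail_pos z hz
  have hb_neg : ∀ z : ℝ, z < 0 → h z ≤ Real.sqrt M * (-z) ^ (-(p / 2)) := by
    intro z hz
    refine sqrt_bound (-z) (by linarith) _ (mul_nonneg (hF0 z) (by linarith [hF1 z])) ?_
    calc F z * (1 - F z) ≤ F z * 1 :=
          mul_le_mul_of_nonneg_left (by linarith [hF0 z]) (hF0 z)
      _ = F z := mul_one _
      _ ≤ M / (-z) ^ p := tail_neg z hz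
  -- majorant G
  set G : ℝ → ENNReal := fun z =>
    (Set.Icc (-1 : ℝ) 1).indicator (fun _ => 1) z
    + (Set.Ioi (1 : ℝ)).indicator (fun z => ENNReal.ofReal (Real.sqrt M * z ^ (-(p / 2)))) z
    + (Set.Iio (-1 : ℝ)).indicator
        (fun z => ENNReal.ofReal (Real.sqrt M * (-z) ^ (-(p / 2)))) z with hGdef
  have hle : ∀ z, ENNReal.ofReal (h z) ≤ G z := by
    intro z
    rcases le_or_gt z 1 with hz1 | hz1
    · rcases le_or_gt (-1 : ℝ) z with hz2 | hz2
      · have : ENNReal.ofReal (h z) ≤ (Set.Icc (-1 : ℝ) 1).indicator (fun _ => 1) z := by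
          rw [Set.indicator_of_mem (Set.mem_Icc.mpr ⟨hz2, hz1⟩)]
          simpa using ENNReal.ofReal_le_ofReal (hble1 z)
        exact le_trans this (le_trans le_self_add le_self_add)
      · have : ENNReal.ofReal (h z)
            ≤ (Set.Iio (-1 : ℝ)).indicator
              (fun z => ENNReal.ofReal (Real.sqrt M * (-z) ^ (-(p / 2)))) z := by
          rw [Set.indicator_of_mem (Set.mem_Iio.mpr hz2)]
          exact ENNReal.ofReal_le_ofReal (hb_neg z (by linarith))
        exact le_trans this le_add_self
    · have : ENNReal.ofReal (h z)
          ≤ (Set.Ioi (1 : ℝ)).indicator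
            (fun z => ENNReal.ofReal (Real.sqrt M * z ^ (-(p / 2)))) z := by
        rw [Set.indicator_of_mem (Set.mem_Ioi.mpr hz1)]
        exact ENNReal.ofReal_le_ofReal (hb_pos z (by linarith))
      exact le_trans this (le_trans le_add_self le_self_add)
  have hexp : -(p / 2) < -1 := by linarith
  have hint : IntegrableOn (fun z : ℝ => Real.sqrt M * z ^ (-(p / 2))) (Set.Ioi (1 : ℝ)) :=
    (integrableOn_Ioi_rpow_of_lt hexp zero_lt_one).const_mul _
  have hIoi : ∫⁻ z in Set.Ioi (1 : ℝ),
      ENNReal.ofReal (Real.sqrt M * z ^ (-(p / 2))) < ⊤ := hint.lintegral_lt_top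
  have hmeasf : Measurable (fun z : ℝ => ENNReal.ofReal (Real.sqrt M * z ^ (-(p / 2)))) := by
    fun_prop
  have hIio : ∫⁻ z in Set.Iio (-1 : ℝ),
      ENNReal.ofReal (Real.sqrt M * (-z) ^ (-(p / 2))) < ⊤ := by
    have hpre : (Neg.neg : ℝ → ℝ) ⁻¹' Set.Ioi (1 : ℝ) = Set.Iio (-1 : ℝ) := by
      ext x; simp [lt_neg]
    have := (Measure.measurePreserving_neg (volume : Measure ℝ)).setLIntegral_comp_preimage_emb
      (MeasurableEquiv.neg ℝ).measurableEmbedding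
      (fun z : ℝ => ENNReal.ofReal (Real.sqrt M * z ^ (-(p / 2)))) (Set.Ioi 1)
    rw [hpre] at this
    rw [show (fun z : ℝ => ENNReal.ofReal (Real.sqrt M * (-z) ^ (-(p / 2))))
      = fun z : ℝ => ENNReal.ofReal (Real.sqrt M * ((MeasurableEquiv.neg ℝ) z) ^ (-(p / 2)))
      from rfl] at *
    calc ∫⁻ z in Set.Iio (-1 : ℝ),
        ENNReal.ofReal (Real.sqrt M * (-z) ^ (-(p / 2))) = _ := this
      _ < ⊤ := hIoi
  have hG : ∫⁻ z, G z < ⊤ := by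
    have hm2 : Measurable (fun z : ℝ => ENNReal.ofReal (Real.sqrt M * (-z) ^ (-(p / 2)))) := by
      fun_prop
    simp only [hGdef]
    rw [lintegral_add_right _ (hm2.indicator measurableSet_Iio),
      lintegral_add_right _ (hmeasf.indicator measurableSet_Ioi),
      lintegral_indicator measurableSet_Icc, lintegral_indicator measurableSet_Ioi,
      lintegral_indicator measurableSet_Iio]
    have h1 : ∫⁻ _ in Set.Icc (-1 : ℝ) 1, (1 : ENNReal) < ⊤ := by
      rw [setLIntegral_one]
      exact measure_Icc_lt_top
    exact ENNReal.add_lt_top.2 ⟨ENNReal.add_lt_top.2 ⟨h1, hIoi⟩, hIio⟩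
  exact lt_of_le_of_lt (lintegral_mono hle) hG
end

section
/- For all t₀, t ∈ ℕ, Borel probability measures F, F' on ℝ with finite first moment, and z, z' ∈ ℝ, W₁(R(t,F,z), R(t,F',z')) ≤ ((t₀+t)/(t₀+t+1)) · W₁(F,F') + (1/(t₀+t+1)) · |z − z'|. -/
open MeasureTheory
open scoped ENNReal

/-- Wasserstein-1 distance via the Kantorovich–Rubinstein dual formula, taking the
supremum over bounded 1-Lipschitz test functions. -/
noncomputable def W1 (μ ν : Measure ℝ) : ℝ :=
  sSup {d : ℝ | ∃ f : ℝ → ℝ, LipschitzWith 1 f ∧ (∃ C, ∀ x, |f x| ≤ C) ∧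
    d = (∫ x, f x ∂μ) - ∫ x, f x ∂ν}

/-- The empirical-distribution update map
`R(t,F,z) = ((t₀+t)/(t₀+t+1))·F + (1/(t₀+t+1))·δ_z`. -/
noncomputable def Rupd (t₀ t : ℕ) (F : Measure ℝ) (z : ℝ) : Measure ℝ :=
  (((t₀ : ℝ≥0∞) + t) / ((t₀ : ℝ≥0∞) + t + 1)) • F +
    (1 / ((t₀ : ℝ≥0∞) + t + 1)) • Measure.dirac z

lemma W1set_bddAbove (μ ν : Measure ℝ) [IsProbabilityMeasure μ] [IsProbabilityMeasure ν]
    (hμ : Integrable id μ) (hν : Integrable id ν) :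
    BddAbove {d : ℝ | ∃ f : ℝ → ℝ, LipschitzWith 1 f ∧ (∃ C, ∀ x, |f x| ≤ C) ∧
      d = (∫ x, f x ∂μ) - ∫ x, f x ∂ν} := by
  refine ⟨(∫ x, |x| ∂μ) + ∫ x, |x| ∂ν, ?_⟩
  rintro d ⟨f, hf, ⟨C, hC⟩, rfl⟩
  have habs : ∀ x : ℝ, |f x - f 0| ≤ |x| := by
    intro x
    have := hf.dist_le_mul x 0
    simpa [Real.dist_eq] using this
  have hμabs : Integrable (fun x : ℝ => |x|) μ := by simpa using hμ.abs
  have hνabs : Integrable (fun x : ℝ => |x|) ν := by simpa using hν.abs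
  have hfμ : Integrable f μ :=
    (integrable_const C).mono' hf.continuous.aestronglyMeasurable (ae_of_all _ hC)
  have hfν : Integrable f ν :=
    (integrable_const C).mono' hf.continuous.aestronglyMeasurable (ae_of_all _ hC)
  have keyμ : (∫ x, f x ∂μ) = (∫ x, (f x - f 0) ∂μ) + f 0 := by
    rw [integral_sub hfμ (integrable_const _), integral_const]; simp
  have keyν : (∫ x, f x ∂ν) = (∫ x, (f x - f 0) ∂ν) + f 0 := by
    rw [integral_sub hfν (integrable_const _), integral_const]; simp
  have h1 : (∫ x, (f x - f 0) ∂μ) ≤ ∫ x, |x| ∂μ := by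
    refine integral_mono (hfμ.sub (integrable_const _)) hμabs ?_
    intro x; exact (le_abs_self _).trans (habs x)
  have h2 : -(∫ x, (f x - f 0) ∂ν) ≤ ∫ x, |x| ∂ν := by
    rw [← integral_neg]
    refine integral_mono ((hfν.sub (integrable_const _)).neg) hνabs ?_
    intro x; exact (neg_le_abs _).trans (habs x)
  rw [keyμ, keyν]
  linarith

lemma integral_sub_le_W1 (μ ν : Measure ℝ) [IsProbabilityMeasure μ] [IsProbabilityMeasure ν]
    (hμ : Integrable id μ) (hν : Integrable id ν) {f : ℝ → ℝ}
    (hf : LipschitzWith 1 f) (hC : ∃ C, ∀ x, |f x| ≤ C) :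
    (∫ x, f x ∂μ) - (∫ x, f x ∂ν) ≤ W1 μ ν :=
  le_csSup (W1set_bddAbove μ ν hμ hν) ⟨f, hf, hC, rfl⟩

lemma W1_nonneg (μ ν : Measure ℝ) [IsProbabilityMeasure μ] [IsProbabilityMeasure ν]
    (hμ : Integrable id μ) (hν : Integrable id ν) : 0 ≤ W1 μ ν := by
  have := integral_sub_le_W1 μ ν hμ hν (f := fun _ => 0)
    ((LipschitzWith.const 0).weaken (by norm_num)) ⟨0, by simp⟩
  simpa using this

theorem W1_Rupd_le (t₀ t : ℕ) (F F' : Measure ℝ)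
    [IsProbabilityMeasure F] [IsProbabilityMeasure F']
    (hF : Integrable id F) (hF' : Integrable id F') (z z' : ℝ) :
    W1 (Rupd t₀ t F z) (Rupd t₀ t F' z') ≤
      ((t₀ + t : ℝ) / (t₀ + t + 1)) * W1 F F' + (1 / (t₀ + t + 1)) * |z - z'| := by
  set n : ℕ := t₀ + t with hn
  set a : ℝ := (n : ℝ) / (n + 1) with ha
  set b : ℝ := 1 / ((n : ℝ) + 1) with hb
  have hapos : 0 ≤ a := by positivity
  have hbpos : 0 ≤ b := by positivity
  set aE : ℝ≥0∞ := ((t₀ : ℝ≥0∞) + t) / ((t₀ : ℝ≥0∞) + t + 1) with haE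
  set bE : ℝ≥0∞ := 1 / ((t₀ : ℝ≥0∞) + t + 1) with hbE
  have hcast : ((t₀ : ℝ≥0∞) + t) = (n : ℝ≥0∞) := by push_cast [hn]; ring
  have hcast1 : ((t₀ : ℝ≥0∞) + t + 1) = ((n + 1 : ℕ) : ℝ≥0∞) := by push_cast [hn]; ring
  have hden : ((n : ℝ≥0∞) + 1) = ((n + 1 : ℕ) : ℝ≥0∞) := by push_cast; ring
  have haE_ne : aE ≠ ⊤ := by
    rw [haE, hcast]
    exact (ENNReal.div_lt_top (by simp) (by simp)).ne
  have hbE_ne : bE ≠ ⊤ := by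
    rw [hbE, hcast]
    exact (ENNReal.div_lt_top (by simp) (by simp)).ne
  have haE_toReal : aE.toReal = a := by
    rw [haE, hcast, ENNReal.toReal_div, ENNReal.toReal_add (by simp) (by simp)]
    simp [ha]
  have hbE_toReal : bE.toReal = b := by
    rw [hbE, hcast, ENNReal.toReal_div, ENNReal.toReal_add (by simp) (by simp)]
    simp [hb]
  have goalRHS : ((t₀ + t : ℝ) / (t₀ + t + 1)) = a ∧ (1 / ((t₀:ℝ) + t + 1)) = b := by
    constructor
    · rw [ha, hn]; push_cast; ring
    · rw [hb, hn]; push_cast; ring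
  have key : ∀ (f : ℝ → ℝ), LipschitzWith 1 f → (∃ C, ∀ x, |f x| ≤ C) →
      ∀ (μ : Measure ℝ) (w : ℝ), IsProbabilityMeasure μ →
      (∫ x, f x ∂(Rupd t₀ t μ w)) = a * (∫ x, f x ∂μ) + b * f w := by
    intro f hf ⟨C, hC⟩ μ w hμ
    have hfμ : Integrable f μ :=
      (integrable_const C).mono' hf.continuous.aestronglyMeasurable (ae_of_all _ hC)
    have hfd : Integrable f (Measure.dirac w) :=
      (integrable_const C).mono' hf.continuous.aestronglyMeasurable (ae_of_all _ hC)
    rw [Rupd, integral_add_measure (hfμ.smul_measure haE_ne) (hfd.smul_measure hbE_ne),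
      integral_smul_measure, integral_smul_measure, integral_dirac,
      haE_toReal, hbE_toReal]
    simp [smul_eq_mul]
  refine Real.sSup_le ?_ ?_
  · rintro d ⟨f, hf, hC, rfl⟩
    rw [key f hf hC F z ‹_›, key f hf hC F' z' ‹_›]
    have h1 : (∫ x, f x ∂F) - (∫ x, f x ∂F') ≤ W1 F F' :=
      integral_sub_le_W1 F F' hF hF' hf hC
    have h2 : f z - f z' ≤ |z - z'| := by
      have h := hf.dist_le_mul z z'
      simp only [Real.dist_eq, NNReal.coe_one, one_mul] at h
      exact (le_abs_self _).trans h
    rw [goalRHS.1, goalRHS.2]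
    nlinarith [mul_le_mul_of_nonneg_left h1 hapos, mul_le_mul_of_nonneg_left h2 hbpos]
  · rw [goalRHS.1, goalRHS.2]
    have := W1_nonneg F F' hF hF'
    positivity
end

section
/- Let X and Y be metric spaces, g : X × ℝ → Y continuous, K ⊆ Y closed, and L ⊆ ℝ compact. Let xₙ → x₀ in X, and set Cₙ = { z ∈ ℝ : g(xₙ, z) ∈ K } and C₀ = { z ∈ ℝ : g(x₀, z) ∈ K }. Assume Cₙ ⊆ L for all n. Then for every ε > 0 there exists N such that for all n > N, Cₙ is contained in the ε-thickening { z : dist(z, C₀) ≤ ε } of C₀. -/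
open Filter Topology

theorem preimage_eventually_subset_thickening
    {X Y : Type*} [MetricSpace X] [MetricSpace Y]
    (g : X × ℝ → Y) (hg : Continuous g) (K : Set Y) (hK : IsClosed K)
    (L : Set ℝ) (hL : IsCompact L)
    (xn : ℕ → X) (x0 : X) (hx : Tendsto xn atTop (nhds x0))
    (hsub : ∀ n, {z : ℝ | g (xn n, z) ∈ K} ⊆ L) :
    ∀ ε : ℝ, 0 < ε → ∃ N : ℕ, ∀ n > N,
      {z : ℝ | g (xn n, z) ∈ K} ⊆
        {z : ℝ | EMetric.infEdist z {z' : ℝ | g (x0, z') ∈ K} ≤ ENNReal.ofReal ε} := by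
  intro ε hε
  by_contra hcon
  push_neg at hcon
  have hfreq : ∃ᶠ n in atTop, ∃ z : ℝ, g (xn n, z) ∈ K ∧
      ¬ EMetric.infEdist z {z' : ℝ | g (x0, z') ∈ K} ≤ ENNReal.ofReal ε := by
    rw [Filter.frequently_atTop]
    intro N
    obtain ⟨n, hn, hnot⟩ := hcon N
    rw [Set.not_subset] at hnot
    obtain ⟨z, hz1, hz2⟩ := hnot
    exact ⟨n, hn.le, z, hz1, hz2⟩
  obtain ⟨φ, hφ, hprop⟩ := Filter.extraction_of_frequently_atTop hfreq
  choose z hzK hzfar using hprop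
  have hzL : ∀ k, z k ∈ L := fun k => hsub (φ k) (hzK k)
  obtain ⟨z0, hz0L, ψ, hψ, hconv⟩ := hL.tendsto_subseq hzL
  have hxconv : Tendsto (fun k => xn (φ (ψ k))) atTop (nhds x0) :=
    hx.comp ((hφ.comp hψ).tendsto_atTop)
  have hgconv : Tendsto (fun k => g (xn (φ (ψ k)), z (ψ k))) atTop
      (nhds (g (x0, z0))) :=
    (hg.tendsto _).comp (hxconv.prodMk_nhds hconv)
  have hz0K : g (x0, z0) ∈ K :=
    hK.mem_of_tendsto hgconv (Filter.Eventually.of_forall fun k => hzK (ψ k))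
  have hmem : z0 ∈ {z' : ℝ | g (x0, z') ∈ K} := hz0K
  have hle : ∀ k, EMetric.infEdist (z (ψ k)) {z' : ℝ | g (x0, z') ∈ K} ≤
      edist (z (ψ k)) z0 := fun k => EMetric.infEdist_le_edist_of_mem hmem
  obtain ⟨N, hN⟩ := (EMetric.tendsto_atTop.mp hconv) (ENNReal.ofReal ε)
    (by simp [hε])
  have hk := hN N le_rfl
  exact hzfar (ψ N) ((hle N).trans hk.le)
end

section
/- Let ν be a Borel probability measure on ℝ with finite first moment and let r ≥ 0. Then the set B = { μ : μ a Borel probability measure on ℝ such that ∫ f dμ − ∫ f dν ≤ r for every bounded 1-Lipschitz f : ℝ → ℝ } is compact in the topology of weak convergence of probability measures on ℝ. -/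
/-!
By Prokhorov's theorem it suffices to show that the ball is closed and tight. It is closed because
it is cut out by the weakly continuous conditions `∫ f dμ ≤ r + ∫ f dν`. It is tight because the
test function `x ↦ min ‖x‖ a` is bounded and 1-Lipschitz, so every `μ` in the ball satisfies
`∫ min ‖x‖ a dμ ≤ r + ∫ ‖x‖ dν`, and Markov's inequality turns this into the uniform tail bound
`μ {a < ‖x‖} ≤ (r + ∫ ‖x‖ dν) / a`.
-/

open MeasureTheory Filter Topology Set

lemma abs_min_le_abs_of_nonneg {t : ℝ} (ht : 0 ≤ t) (a : ℝ) : |min t a| ≤ |a| :=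
  abs_le.2 ⟨le_min (by linarith [abs_nonneg a]) (neg_abs_le a),
    (min_le_right _ _).trans (le_abs_self a)⟩

section BoundedLipschitzBall

variable {E : Type*} [MeasurableSpace E]

def boundedLipschitzBall [PseudoMetricSpace E] (ν : ProbabilityMeasure E) (r : ℝ) :
    Set (ProbabilityMeasure E) :=
  {μ | ∀ f : E → ℝ, LipschitzWith 1 f → (∃ C, ∀ x, |f x| ≤ C) →
    (∫ x, f x ∂(μ : Measure E)) - ∫ x, f x ∂(ν : Measure E) ≤ r}

lemma MeasureTheory.ProbabilityMeasure.continuous_integral_of_bounded [TopologicalSpace E]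
    [OpensMeasurableSpace E] {f : E → ℝ} (hf : Continuous f) (hbdd : ∃ C, ∀ x, |f x| ≤ C) :
    Continuous fun μ : ProbabilityMeasure E ↦ ∫ x, f x ∂μ := by
  obtain ⟨C, hC⟩ := hbdd
  exact ProbabilityMeasure.continuous_integral_boundedContinuousFunction
    (BoundedContinuousFunction.ofNormedAddCommGroup f hf C hC)

lemma isClosed_boundedLipschitzBall [PseudoMetricSpace E] [OpensMeasurableSpace E]
    (ν : ProbabilityMeasure E) (r : ℝ) : IsClosed (boundedLipschitzBall ν r) := by
  simp only [boundedLipschitzBall, ofPred_forall]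
  exact isClosed_iInter fun f ↦ isClosed_iInter fun hf ↦ isClosed_iInter fun hbdd ↦
    isClosed_le ((ProbabilityMeasure.continuous_integral_of_bounded hf.continuous hbdd).sub
      continuous_const) continuous_const

variable [NormedAddCommGroup E] [OpensMeasurableSpace E]

lemma integrable_min_norm_const (μ : Measure E) [IsFiniteMeasure μ] (a : ℝ) :
    Integrable (fun x ↦ min ‖x‖ a) μ :=
  (integrable_const |a|).mono' (by fun_prop)
    (ae_of_all _ fun x ↦ abs_min_le_abs_of_nonneg (norm_nonneg x) a)

lemma integral_min_norm_le_of_mem_boundedLipschitzBall {ν μ : ProbabilityMeasure E} {r : ℝ}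
    (hμ : μ ∈ boundedLipschitzBall ν r) (hν : Integrable (fun x ↦ ‖x‖) (ν : Measure E))
    (a : ℝ) : ∫ x, min ‖x‖ a ∂(μ : Measure E) ≤ r + ∫ x, ‖x‖ ∂(ν : Measure E) := by
  have hlip : LipschitzWith 1 fun x : E ↦ min ‖x‖ a := lipschitzWith_one_norm.min_const a
  have hbdd : ∃ C, ∀ x : E, |min ‖x‖ a| ≤ C :=
    ⟨|a|, fun x ↦ abs_min_le_abs_of_nonneg (norm_nonneg x) a⟩
  have hν_le : ∫ x, min ‖x‖ a ∂(ν : Measure E) ≤ ∫ x, ‖x‖ ∂(ν : Measure E) :=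
    integral_mono (integrable_min_norm_const _ a) hν fun x ↦ min_le_left _ _
  linarith [hμ _ hlip hbdd]

lemma mul_measureReal_norm_ge_le_integral_min_norm (μ : Measure E) [IsFiniteMeasure μ]
    {a : ℝ} (ha : 0 ≤ a) : a * μ.real {x | a ≤ ‖x‖} ≤ ∫ x, min ‖x‖ a ∂μ := by
  have h := mul_meas_ge_le_integral_of_nonneg
    (ae_of_all _ fun x ↦ le_min (norm_nonneg x) ha) (integrable_min_norm_const μ a) a
  simpa only [le_min_iff, le_refl, and_true] using h

lemma isTightMeasureSet_of_integral_min_norm_le [BorelSpace E] [ProperSpace E]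
    {S : Set (ProbabilityMeasure E)} {K : ℝ}
    (hS : ∀ μ ∈ S, ∀ a, ∫ x, min ‖x‖ a ∂(μ : Measure E) ≤ K) :
    IsTightMeasureSet {(μ : Measure E) | μ ∈ S} := by
  have htail : ∀ R > 0,
      ⨆ μ ∈ {(μ : Measure E) | μ ∈ S}, μ {x | R < ‖x‖} ≤ ENNReal.ofReal (K / R) := by
    intro R hR
    refine iSup₂_le ?_
    rintro _ ⟨μ, hμ, rfl⟩
    calc (μ : Measure E) {x | R < ‖x‖} ≤ (μ : Measure E) {x | R ≤ ‖x‖} :=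
          measure_mono fun x (hx : R < ‖x‖) ↦ hx.le
      _ = ENNReal.ofReal ((μ : Measure E).real {x | R ≤ ‖x‖}) := (ofReal_measureReal).symm
      _ ≤ ENNReal.ofReal (K / R) := by
          gcongr
          rw [le_div_iff₀ hR, mul_comm]
          exact (mul_measureReal_norm_ge_le_integral_min_norm _ hR.le).trans (hS μ hμ R)
  have hlim : Tendsto (fun R : ℝ ↦ ENNReal.ofReal (K / R)) atTop (𝓝 0) := by
    simpa using ENNReal.tendsto_ofReal (tendsto_const_nhds.div_atTop tendsto_id)
  exact isTightMeasureSet_of_tendsto_measure_norm_gt <|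
    tendsto_of_tendsto_of_tendsto_of_le_of_le' tendsto_const_nhds hlim
      (Eventually.of_forall fun _ ↦ zero_le) ((eventually_gt_atTop 0).mono htail)

theorem isCompact_boundedLipschitzBall [BorelSpace E] [ProperSpace E]
    {ν : ProbabilityMeasure E} (hν : Integrable (fun x ↦ ‖x‖) (ν : Measure E)) (r : ℝ) :
    IsCompact (boundedLipschitzBall ν r) := by
  rw [← (isClosed_boundedLipschitzBall ν r).closure_eq]
  exact isCompact_closure_of_isTightMeasureSet <| isTightMeasureSet_of_integral_min_norm_le
    fun μ hμ ↦ integral_min_norm_le_of_mem_boundedLipschitzBall hμ hν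

end BoundedLipschitzBall

theorem wasserstein_ball_isCompact_general (ν : ProbabilityMeasure ℝ)
    (hν : Integrable id (ν : Measure ℝ)) (r : ℝ) :
    IsCompact {μ : ProbabilityMeasure ℝ |
      ∀ f : ℝ → ℝ, LipschitzWith 1 f → (∃ C, ∀ x, |f x| ≤ C) →
        (∫ x, f x ∂(μ : Measure ℝ)) - ∫ x, f x ∂(ν : Measure ℝ) ≤ r} :=
  isCompact_boundedLipschitzBall hν.norm r

theorem wasserstein_ball_isCompact (ν : ProbabilityMeasure ℝ)
    (hν : Integrable id (ν : Measure ℝ)) (r : ℝ) (hr : 0 ≤ r) :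
    IsCompact {μ : ProbabilityMeasure ℝ |
      ∀ f : ℝ → ℝ, LipschitzWith 1 f → (∃ C, ∀ x, |f x| ≤ C) →
        (∫ x, f x ∂(μ : Measure ℝ)) - ∫ x, f x ∂(ν : Measure ℝ) ≤ r} :=
  wasserstein_ball_isCompact_general ν hν r
end

section
/- Let ν be a Borel probability measure on ℝ with finite first moment and let r ≥ 0. Then the family of Borel probability measures B = { μ : ∫ f dμ − ∫ f dν ≤ r for every bounded 1-Lipschitz f : ℝ → ℝ } is tight: for every ε > 0 there exists a compact set K ⊆ ℝ with μ(ℝ \ K) ≤ ε for all μ ∈ B. -/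
/-!
Test the Wasserstein ball against `f x = min ((dist x x₀ - R)⁺) L`, which is bounded and
1-Lipschitz and equals `L` outside `closedBall x₀ (R + L)`. Hence
`L · μ(closedBall x₀ (R + L))ᶜ ≤ ∫ f dμ ≤ r + ∫ (dist x x₀ - R)⁺ dν`. Finite first moment of `ν`
makes the last integral at most `1` for `R` large (dominated convergence); then `L = (r + 1) / ε`
gives mass at most `ε` outside the compact ball.
-/

open MeasureTheory Filter Metric Topology

section TruncExcessDist

variable {X : Type*} [PseudoMetricSpace X]

noncomputable def truncExcessDist (x₀ : X) (R L : ℝ) (x : X) : ℝ :=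
  min (max (dist x x₀ - R) 0) L

variable {x₀ : X} {R L : ℝ}

theorem lipschitzWith_truncExcessDist : LipschitzWith 1 (truncExcessDist x₀ R L) := by
  have hexcess : LipschitzWith 1 (fun x => dist x x₀ - R) := by
    simpa using (LipschitzWith.dist_left x₀).sub (LipschitzWith.const R)
  exact (hexcess.max_const 0).min_const L

theorem truncExcessDist_nonneg (hL : 0 ≤ L) (x : X) : 0 ≤ truncExcessDist x₀ R L x :=
  le_min (le_max_right _ _) hL

theorem abs_truncExcessDist_le (hL : 0 ≤ L) (x : X) : |truncExcessDist x₀ R L x| ≤ L := by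
  rw [abs_of_nonneg (truncExcessDist_nonneg hL x)]
  exact min_le_right _ _

theorem truncExcessDist_le_max (x : X) : truncExcessDist x₀ R L x ≤ max (dist x x₀ - R) 0 :=
  min_le_left _ _

theorem indicator_compl_closedBall_le_truncExcessDist (hL : 0 ≤ L) (x : X) :
    (closedBall x₀ (R + L))ᶜ.indicator (fun _ => L) x ≤ truncExcessDist x₀ R L x := by
  by_cases hx : x ∈ (closedBall x₀ (R + L))ᶜ
  · rw [Set.indicator_of_mem hx]
    have hfar : R + L < dist x x₀ := by simpa using hx
    exact le_min ((by linarith : L ≤ dist x x₀ - R).trans (le_max_left _ _)) le_rfl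
  · rw [Set.indicator_of_notMem hx]
    exact truncExcessDist_nonneg hL x

theorem norm_max_dist_sub_le (hR : 0 ≤ R) (x : X) :
    ‖max (dist x x₀ - R) 0‖ ≤ dist x x₀ := by
  rw [Real.norm_of_nonneg (le_max_right _ _)]
  exact max_le (by linarith) dist_nonneg

variable [MeasurableSpace X] [OpensMeasurableSpace X]

theorem mul_measureReal_compl_closedBall_le_integral_truncExcessDist (μ : Measure X)
    [IsFiniteMeasure μ] (hL : 0 ≤ L) :
    L * μ.real (closedBall x₀ (R + L))ᶜ ≤ ∫ x, truncExcessDist x₀ R L x ∂μ := by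
  have hmeas : MeasurableSet (closedBall x₀ (R + L))ᶜ := measurableSet_closedBall.compl
  have hint : Integrable (truncExcessDist x₀ R L) μ :=
    .of_bound lipschitzWith_truncExcessDist.continuous.aestronglyMeasurable L
      (ae_of_all _ (abs_truncExcessDist_le hL))
  calc L * μ.real (closedBall x₀ (R + L))ᶜ
      = ∫ x, (closedBall x₀ (R + L))ᶜ.indicator (fun _ => L) x ∂μ := by
        rw [integral_indicator_const L hmeas, smul_eq_mul, mul_comm]
    _ ≤ ∫ x, truncExcessDist x₀ R L x ∂μ :=
        integral_mono ((integrable_const L).indicator hmeas) hint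
          (indicator_compl_closedBall_le_truncExcessDist hL)

theorem integrable_max_dist_sub {ν : Measure X} (hν : Integrable (dist · x₀) ν) (hR : 0 ≤ R) :
    Integrable (fun x => max (dist x x₀ - R) 0) ν :=
  hν.mono' (by fun_prop) (ae_of_all _ (norm_max_dist_sub_le hR))

theorem integral_truncExcessDist_le {ν : Measure X} (hν : Integrable (dist · x₀) ν)
    (hR : 0 ≤ R) (hL : 0 ≤ L) :
    ∫ x, truncExcessDist x₀ R L x ∂ν ≤ ∫ x, max (dist x x₀ - R) 0 ∂ν :=
  integral_mono_of_nonneg (ae_of_all _ (truncExcessDist_nonneg hL)) (integrable_max_dist_sub hν hR)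
    (ae_of_all _ truncExcessDist_le_max)

theorem tendsto_integral_max_dist_sub_atTop {ν : Measure X} (hν : Integrable (dist · x₀) ν) :
    Tendsto (fun R => ∫ x, max (dist x x₀ - R) 0 ∂ν) atTop (𝓝 0) := by
  have hlim : ∀ x, Tendsto (fun R => max (dist x x₀ - R) 0) atTop (𝓝 0) := fun x =>
    tendsto_const_nhds.congr' <| (eventually_ge_atTop (dist x x₀)).mono fun R hR =>
      (max_eq_right (by linarith)).symm
  simpa using tendsto_integral_filter_of_dominated_convergence (dist · x₀)
    (.of_forall fun R => by fun_prop)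
    ((eventually_ge_atTop 0).mono fun R hR => ae_of_all _ (norm_max_dist_sub_le hR))
    hν (ae_of_all _ hlim)

end TruncExcessDist

theorem wasserstein_ball_tight_general (ν : Measure ℝ)
    (hν : Integrable id ν) (r : ℝ) (hr : 0 ≤ r) :
    ∀ ε : ℝ, 0 < ε → ∃ K : Set ℝ, IsCompact K ∧
      ∀ μ : Measure ℝ, IsProbabilityMeasure μ →
        (∀ f : ℝ → ℝ, LipschitzWith 1 f → (∃ C, ∀ x, |f x| ≤ C) →
          (∫ x, f x ∂μ) - ∫ x, f x ∂ν ≤ r) →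
        μ Kᶜ ≤ ENNReal.ofReal ε := by
  intro ε hε
  have hdist : Integrable (dist · (0 : ℝ)) ν := by simpa using hν.norm
  obtain ⟨R, hR, hνtail⟩ : ∃ R : ℝ, 0 ≤ R ∧ ∫ x, max (dist x 0 - R) 0 ∂ν ≤ 1 :=
    ((eventually_ge_atTop 0).and
      ((tendsto_integral_max_dist_sub_atTop hdist).eventually (ge_mem_nhds one_pos))).exists
  set L := (r + 1) / ε
  have hL : 0 ≤ L := by positivity
  refine ⟨closedBall 0 (R + L), isCompact_closedBall _ _, fun μ hμ hball => ?_⟩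
  have hmass : L * μ.real (closedBall 0 (R + L))ᶜ ≤ L * ε :=
    calc L * μ.real (closedBall 0 (R + L))ᶜ
        ≤ ∫ x, truncExcessDist 0 R L x ∂μ :=
          mul_measureReal_compl_closedBall_le_integral_truncExcessDist μ hL
      _ ≤ r + ∫ x, truncExcessDist 0 R L x ∂ν := by
          have := hball (truncExcessDist 0 R L) lipschitzWith_truncExcessDist
            ⟨L, abs_truncExcessDist_le hL⟩
          linarith
      _ ≤ r + 1 := by linarith [integral_truncExcessDist_le hdist hR hL]
      _ = L * ε := (div_mul_cancel₀ _ hε.ne').symm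
  rw [← ofReal_measureReal]
  exact ENNReal.ofReal_le_ofReal (le_of_mul_le_mul_left hmass (by positivity))

theorem wasserstein_ball_tight (ν : Measure ℝ) [IsProbabilityMeasure ν]
    (hν : Integrable id ν) (r : ℝ) (hr : 0 ≤ r) :
    ∀ ε : ℝ, 0 < ε → ∃ K : Set ℝ, IsCompact K ∧
      ∀ μ : Measure ℝ, IsProbabilityMeasure μ →
        (∀ f : ℝ → ℝ, LipschitzWith 1 f → (∃ C, ∀ x, |f x| ≤ C) →
          (∫ x, f x ∂μ) - ∫ x, f x ∂ν ≤ r) →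
        μ Kᶜ ≤ ENNReal.ofReal ε :=
  wasserstein_ball_tight_general ν hν r hr
end

section
/- Let n ∈ ℕ, let A be a metric space, let S : ℝⁿ × A × ℝ → ℝⁿ be continuous, and let V : ℝⁿ → ℝ be lower semicontinuous and bounded. If (x_k, a_k) → (x₀, a₀) in ℝⁿ × A and F_k → F₀ weakly as Borel probability measures on ℝ, then liminf_{k→∞} ∫ V(S(x_k, a_k, z)) dF_k(z) ≥ ∫ V(S(x₀, a₀, z)) dF₀(z). In particular, the function (x, a, F) ↦ ∫ V(S(x,a,z)) dF(z) is jointly lower semicontinuous when the space of Borel probability measures on ℝ carries the topology of weak convergence. -/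
open MeasureTheory Filter Topology Set

/-- Slice lemma: if `G` is open in the product and `(x_k, a_k) → (x_0, a_0)`, and the
measures satisfy the open-set portmanteau liminf condition, then the measure of the
slice of `G` at the limit point is at most the liminf of the measures of the slices. -/
private lemma slice_liminf {n : ℕ} {A : Type*} [MetricSpace A]
    {G : Set ((Fin n → ℝ) × A × ℝ)} (hG : IsOpen G)
    {xk : ℕ → Fin n → ℝ} {x0 : Fin n → ℝ} (hx : Tendsto xk atTop (𝓝 x0))
    {ak : ℕ → A} {a0 : A} (ha : Tendsto ak atTop (𝓝 a0))
    {Fk : ℕ → Measure ℝ} {F0 : Measure ℝ}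
    (hopen : ∀ U : Set ℝ, IsOpen U → F0 U ≤ atTop.liminf fun k => Fk k U) :
    F0 {z | (x0, a0, z) ∈ G} ≤ atTop.liminf fun k => Fk k {z | (xk k, ak k, z) ∈ G} := by
  set p : ℕ → (Fin n → ℝ) × A := fun k => (xk k, ak k) with hp_def
  have hp : Tendsto p atTop (𝓝 (x0, a0)) := hx.prodMk_nhds ha
  set G' : Set (((Fin n → ℝ) × A) × ℝ) :=
    (fun qz : ((Fin n → ℝ) × A) × ℝ => (qz.1.1, qz.1.2, qz.2)) ⁻¹' G with hG'_def
  have hG' : IsOpen G' := hG.preimage (by fun_prop)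
  set C : ℕ → Set ((Fin n → ℝ) × A) :=
    (fun N => insert (x0, a0) (Set.range fun k => p (k + N))) with hC_def
  have hCcpt : ∀ N, IsCompact (C N) := fun N =>
    (hp.comp (tendsto_add_atTop_nat N)).isCompact_insert_range
  set W : ℕ → Set ℝ := (fun N => {z | ∀ q ∈ C N, (q, z) ∈ G'}) with hW_def
  have hWopen : ∀ N, IsOpen (W N) := by
    intro N
    rw [isOpen_iff_forall_mem_open]
    intro z hz
    have hsub : C N ×ˢ ({z} : Set ℝ) ⊆ G' := by
      rintro ⟨q, z'⟩ ⟨hq, hz'⟩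
      rcases hz' with rfl
      exact hz q hq
    obtain ⟨U, Vo, hU, hVo, hCU, hzV, hUV⟩ :=
      generalized_tube_lemma (hCcpt N) isCompact_singleton hG' hsub
    exact ⟨Vo, fun z' hz' q hq => hUV ⟨hCU hq, hz'⟩, hVo, hzV rfl⟩
  have hWmono : Monotone W := by
    intro N M hNM z hz q hq
    apply hz q
    simp only [hC_def, Set.mem_insert_iff, Set.mem_range] at hq ⊢
    rcases hq with rfl | ⟨k, rfl⟩
    · exact Or.inl rfl
    · exact Or.inr ⟨k + (M - N), by congr 1; omega⟩
  have hWunion : {z : ℝ | (x0, a0, z) ∈ G} = ⋃ N, W N := by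
    apply Set.Subset.antisymm
    · intro z hz
      have hzopen : IsOpen {q : (Fin n → ℝ) × A | (q, z) ∈ G'} :=
        hG'.preimage (continuous_id.prodMk continuous_const)
    -- eventually the sequence enters this open neighbourhood of (x0, a0)
      have hev : ∀ᶠ k in atTop, p k ∈ {q : (Fin n → ℝ) × A | (q, z) ∈ G'} :=
        hp (hzopen.mem_nhds (by exact hz))
      rw [eventually_atTop] at hev
      obtain ⟨N, hN⟩ := hev
      refine Set.mem_iUnion.mpr ⟨N, ?_⟩
      intro q hq
      simp only [hC_def, Set.mem_insert_iff, Set.mem_range] at hq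
      rcases hq with rfl | ⟨k, rfl⟩
      · exact hz
      · exact hN (k + N) (Nat.le_add_left N k)
    · rintro z hz
      obtain ⟨N, hN⟩ := Set.mem_iUnion.mp hz
      exact hN (x0, a0) (Set.mem_insert _ _)
  rw [hWunion, Directed.measure_iUnion hWmono.directed_le]
  refine iSup_le fun N => ?_
  refine (hopen (W N) (hWopen N)).trans (liminf_le_liminf ?_)
  filter_upwards [eventually_ge_atTop N] with k hk
  apply measure_mono
  intro z hz
  have : p k ∈ C N := by
    simp only [hC_def, Set.mem_insert_iff, Set.mem_range]
    exact Or.inr ⟨k - N, by congr 1; omega⟩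
  exact hz (p k) this

/-- The key liminf inequality: lower semicontinuity of the one-step expected value
along converging sequences. -/
private lemma key_liminf (n : ℕ) {A : Type*} [MetricSpace A]
    (S : (Fin n → ℝ) × A × ℝ → Fin n → ℝ) (hS : Continuous S)
    (V : (Fin n → ℝ) → ℝ) (hV : LowerSemicontinuous V) (hVb : ∃ C, ∀ x, |V x| ≤ C)
    (xk : ℕ → Fin n → ℝ) (x0 : Fin n → ℝ) (hx : Tendsto xk atTop (𝓝 x0))
    (ak : ℕ → A) (a0 : A) (ha : Tendsto ak atTop (𝓝 a0))
    (Fk : ℕ → Measure ℝ) (F0 : Measure ℝ)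
    [∀ k, IsProbabilityMeasure (Fk k)] [IsProbabilityMeasure F0]
    (hweak : ∀ g : ℝ → ℝ, Continuous g → (∃ C, ∀ x, |g x| ≤ C) →
      Tendsto (fun k => ∫ x, g x ∂(Fk k)) atTop (𝓝 (∫ x, g x ∂F0))) :
    (∫ z, V (S (x0, a0, z)) ∂F0) ≤
      liminf (fun k => ∫ z, V (S (xk k, ak k, z)) ∂(Fk k)) atTop := by
  obtain ⟨C, hC⟩ := hVb
  -- weak convergence in the `ProbabilityMeasure` sense
  have htend := (ProbabilityMeasure.tendsto_iff_forall_integral_tendsto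
      (μs := fun k => (⟨Fk k, inferInstance⟩ : ProbabilityMeasure ℝ))
      (μ := (⟨F0, inferInstance⟩ : ProbabilityMeasure ℝ)) (F := atTop)).mpr
    (fun f => hweak f f.continuous ⟨‖f‖, fun x => by
      rw [← Real.norm_eq_abs]; exact f.norm_coe_le_norm x⟩)
  have hopen : ∀ U : Set ℝ, IsOpen U → F0 U ≤ atTop.liminf fun k => Fk k U := fun U hU =>
    ProbabilityMeasure.le_liminf_measure_open_of_tendsto htend hU
  -- the shifted nonnegative function
  set f : (Fin n → ℝ) × A × ℝ → ℝ := (fun q => V (S q) + C) with hf_def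
  have hflsc : LowerSemicontinuous f := by
    have hVC : LowerSemicontinuous (fun x => V x + C) :=
      hV.add lowerSemicontinuous_const
    rw [lowerSemicontinuous_iff_isOpen_preimage]
    intro y
    exact (hVC.isOpen_preimage y).preimage hS
  have hfnn : ∀ q, 0 ≤ f q := fun q => by
    have := (abs_le.mp (hC (S q))).1
    simp only [hf_def]; linarith
  have hfub : ∀ q, f q ≤ C + C := fun q => by
    have := (abs_le.mp (hC (S q))).2
    simp only [hf_def]; linarith
  have hmzV : ∀ (x : Fin n → ℝ) (a : A), Measurable fun z : ℝ => V (S (x, a, z)) := by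
    intro x a
    have hlsc : LowerSemicontinuous fun z : ℝ => V (S (x, a, z)) := by
      rw [lowerSemicontinuous_iff_isOpen_preimage]
      intro y
      exact (hV.isOpen_preimage y).preimage
        (hS.comp (continuous_const.prodMk (continuous_const.prodMk continuous_id)))
    exact hlsc.measurable
  have hmz : ∀ (x : Fin n → ℝ) (a : A), Measurable fun z : ℝ => f (x, a, z) := fun x a =>
    (hmzV x a).add_const C
  -- key ENNReal inequality via layer cake and the slice lemma
  have key : ∫⁻ z, ENNReal.ofReal (f (x0, a0, z)) ∂F0 ≤
      atTop.liminf fun k => ∫⁻ z, ENNReal.ofReal (f (xk k, ak k, z)) ∂(Fk k) := by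
    rw [lintegral_eq_lintegral_meas_lt F0 (Eventually.of_forall fun z => hfnn _)
      (hmz x0 a0).aemeasurable]
    calc ∫⁻ t in Ioi (0 : ℝ), F0 {z | t < f (x0, a0, z)}
        ≤ ∫⁻ t in Ioi (0 : ℝ),
            atTop.liminf (fun k => Fk k {z | t < f (xk k, ak k, z)}) := by
          refine lintegral_mono fun t => ?_
          exact slice_liminf (hflsc.isOpen_preimage t) hx ha hopen
      _ ≤ atTop.liminf fun k => ∫⁻ t in Ioi (0 : ℝ), Fk k {z | t < f (xk k, ak k, z)} :=
          lintegral_liminf_le fun k => Antitone.measurable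
            (fun s t hst => measure_mono fun z hz => lt_of_le_of_lt hst hz)
      _ = atTop.liminf fun k => ∫⁻ z, ENNReal.ofReal (f (xk k, ak k, z)) ∂(Fk k) := by
          refine liminf_congr (Eventually.of_forall fun k => ?_)
          rw [lintegral_eq_lintegral_meas_lt (Fk k) (Eventually.of_forall fun z => hfnn _)
            (hmz (xk k) (ak k)).aemeasurable]
  -- bounds
  have hbk : ∀ (μ : Measure ℝ) [IsProbabilityMeasure μ] (x : Fin n → ℝ) (a : A),
      ∫⁻ z, ENNReal.ofReal (f (x, a, z)) ∂μ ≤ ENNReal.ofReal (C + C) := by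
    intro μ _ x a
    calc ∫⁻ z, ENNReal.ofReal (f (x, a, z)) ∂μ
        ≤ ∫⁻ _, ENNReal.ofReal (C + C) ∂μ :=
          lintegral_mono fun z => ENNReal.ofReal_le_ofReal (hfub _)
      _ = ENNReal.ofReal (C + C) := by simp
  have hreal : ∀ (μ : Measure ℝ) [IsProbabilityMeasure μ] (x : Fin n → ℝ) (a : A),
      ∫ z, f (x, a, z) ∂μ = (∫⁻ z, ENNReal.ofReal (f (x, a, z)) ∂μ).toReal := by
    intro μ _ x a
    exact integral_eq_lintegral_of_nonneg_ae (Eventually.of_forall fun z => hfnn _)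
      (hmz x a).aestronglyMeasurable
  -- the real-valued liminf inequality for f
  have keyR : ∫ z, f (x0, a0, z) ∂F0 ≤
      atTop.liminf fun k => ∫ z, f (xk k, ak k, z) ∂(Fk k) := by
    rw [hreal F0 x0 a0]
    have hlim_le : (atTop.liminf fun k => ∫⁻ z, ENNReal.ofReal (f (xk k, ak k, z)) ∂(Fk k))
        ≤ ENNReal.ofReal (C + C) := by
      refine le_trans (liminf_le_liminf (Eventually.of_forall fun k => hbk (Fk k) (xk k) (ak k)))
        ?_
      simp [liminf_const]
    calc (∫⁻ z, ENNReal.ofReal (f (x0, a0, z)) ∂F0).toReal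
        ≤ (atTop.liminf fun k => ∫⁻ z, ENNReal.ofReal (f (xk k, ak k, z)) ∂(Fk k)).toReal :=
          ENNReal.toReal_mono (hlim_le.trans_lt ENNReal.ofReal_lt_top).ne key
      _ = atTop.liminf fun k =>
            (∫⁻ z, ENNReal.ofReal (f (xk k, ak k, z)) ∂(Fk k)).toReal :=
          (ENNReal.liminf_toReal_eq ENNReal.ofReal_ne_top
            (Eventually.of_forall fun k => hbk (Fk k) (xk k) (ak k))).symm
      _ = atTop.liminf fun k => ∫ z, f (xk k, ak k, z) ∂(Fk k) :=
          liminf_congr (Eventually.of_forall fun k => (hreal (Fk k) (xk k) (ak k)).symm)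
  -- translate back to V
  have hint : ∀ (μ : Measure ℝ) [IsProbabilityMeasure μ] (x : Fin n → ℝ) (a : A),
      Integrable (fun z => V (S (x, a, z))) μ := by
    intro μ _ x a
    refine (integrable_const C).mono' (hmzV x a).aestronglyMeasurable
      (Eventually.of_forall fun z => ?_)
    rw [Real.norm_eq_abs]; exact hC _
  have hsplit : ∀ (μ : Measure ℝ) [IsProbabilityMeasure μ] (x : Fin n → ℝ) (a : A),
      ∫ z, f (x, a, z) ∂μ = (∫ z, V (S (x, a, z)) ∂μ) + C := by
    intro μ _ x a
    simp only [hf_def]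
    rw [integral_add (hint μ x a) (integrable_const C), integral_const]
    simp
  have habs : ∀ (μ : Measure ℝ) [IsProbabilityMeasure μ] (x : Fin n → ℝ) (a : A),
      |∫ z, V (S (x, a, z)) ∂μ| ≤ C := by
    intro μ _ x a
    rw [← Real.norm_eq_abs]
    calc ‖∫ z, V (S (x, a, z)) ∂μ‖ ≤ C * (μ Set.univ).toReal :=
          norm_integral_le_of_norm_le_const (Eventually.of_forall fun z => by
            rw [Real.norm_eq_abs]; exact hC _)
      _ = C := by simp
  rw [hsplit F0 x0 a0] at keyR
  have hsplits : (fun k => ∫ z, f (xk k, ak k, z) ∂(Fk k)) =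
      fun k => (∫ z, V (S (xk k, ak k, z)) ∂(Fk k)) + C := by
    funext k; exact hsplit (Fk k) (xk k) (ak k)
  rw [hsplits] at keyR
  have hlae : liminf (fun k => (∫ z, V (S (xk k, ak k, z)) ∂(Fk k)) + C) atTop =
      liminf (fun k => ∫ z, V (S (xk k, ak k, z)) ∂(Fk k)) atTop + C := by
    refine liminf_add_const atTop _ C ?_ ?_
    · exact IsBoundedUnder.isCoboundedUnder_ge
        (isBoundedUnder_of ⟨C, fun k => (abs_le.mp (habs (Fk k) (xk k) (ak k))).2⟩)
    · exact isBoundedUnder_of ⟨-C, fun k => (abs_le.mp (habs (Fk k) (xk k) (ak k))).1⟩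
  rw [hlae] at keyR
  linarith

theorem expected_value_lsc (n : ℕ) {A : Type*} [MetricSpace A]
    (S : (Fin n → ℝ) × A × ℝ → Fin n → ℝ) (hS : Continuous S)
    (V : (Fin n → ℝ) → ℝ) (hV : LowerSemicontinuous V) (hVb : ∃ C, ∀ x, |V x| ≤ C)
    (xk : ℕ → Fin n → ℝ) (x0 : Fin n → ℝ) (hx : Tendsto xk atTop (nhds x0))
    (ak : ℕ → A) (a0 : A) (ha : Tendsto ak atTop (nhds a0))
    (Fk : ℕ → Measure ℝ) (F0 : Measure ℝ)
    [∀ k, IsProbabilityMeasure (Fk k)] [IsProbabilityMeasure F0]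
    (hweak : ∀ g : ℝ → ℝ, Continuous g → (∃ C, ∀ x, |g x| ≤ C) →
      Tendsto (fun k => ∫ x, g x ∂(Fk k)) atTop (nhds (∫ x, g x ∂F0))) :
    (∫ z, V (S (x0, a0, z)) ∂F0) ≤
        liminf (fun k => ∫ z, V (S (xk k, ak k, z)) ∂(Fk k)) atTop ∧
      LowerSemicontinuous (fun p : (Fin n → ℝ) × A × ProbabilityMeasure ℝ =>
        ∫ z, V (S (p.1, p.2.1, z)) ∂(p.2.2 : Measure ℝ)) := by
  constructor
  · exact key_liminf n S hS V hV hVb xk x0 hx ak a0 ha Fk F0 hweak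
  · intro p0 y hy
    by_contra hcon
    rw [Filter.not_eventually] at hcon
    obtain ⟨q, hq, hqy⟩ := exists_seq_forall_of_frequently hcon
    have hqy' : ∀ m, ∫ z, V (S ((q m).1, (q m).2.1, z)) ∂((q m).2.2 : Measure ℝ) ≤ y :=
      fun m => not_lt.mp (hqy m)
    have hx' : Tendsto (fun m => (q m).1) atTop (𝓝 p0.1) :=
      (continuous_fst.tendsto p0).comp hq
    have ha' : Tendsto (fun m => (q m).2.1) atTop (𝓝 p0.2.1) :=
      ((continuous_fst.comp continuous_snd).tendsto p0).comp hq
    have hP : Tendsto (fun m => (q m).2.2) atTop (𝓝 p0.2.2) :=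
      ((continuous_snd.comp continuous_snd).tendsto p0).comp hq
    have hweak' : ∀ g : ℝ → ℝ, Continuous g → (∃ C, ∀ x, |g x| ≤ C) →
        Tendsto (fun m => ∫ x, g x ∂((q m).2.2 : Measure ℝ)) atTop
          (𝓝 (∫ x, g x ∂(p0.2.2 : Measure ℝ))) := by
      rintro g hg ⟨Cg, hCg⟩
      have := ProbabilityMeasure.tendsto_iff_forall_integral_tendsto.mp hP
        (BoundedContinuousFunction.ofNormedAddCommGroup g hg Cg (fun x => by
          rw [Real.norm_eq_abs]; exact hCg x))
      simpa using this
    have hle := key_liminf n S hS V hV hVb _ _ hx' _ _ ha'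
      (fun m => ((q m).2.2 : Measure ℝ)) (p0.2.2 : Measure ℝ) hweak'
    obtain ⟨C, hC⟩ := hVb
    have habs : ∀ m, |∫ z, V (S ((q m).1, (q m).2.1, z)) ∂((q m).2.2 : Measure ℝ)| ≤ C := by
      intro m
      rw [← Real.norm_eq_abs]
      calc ‖∫ z, V (S ((q m).1, (q m).2.1, z)) ∂((q m).2.2 : Measure ℝ)‖
          ≤ C * (((q m).2.2 : Measure ℝ) Set.univ).toReal :=
            norm_integral_le_of_norm_le_const (Eventually.of_forall fun z => by
              rw [Real.norm_eq_abs]; exact hC _)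
        _ = C := by simp
    have hliminf_le : liminf
        (fun m => ∫ z, V (S ((q m).1, (q m).2.1, z)) ∂((q m).2.2 : Measure ℝ)) atTop ≤ y := by
      refine le_trans (liminf_le_liminf (Eventually.of_forall fun m => hqy' m)
            (isBoundedUnder_of ⟨-C, fun m => (abs_le.mp (habs m)).1⟩)
        (IsBoundedUnder.isCoboundedUnder_ge isBoundedUnder_const)) ?_
      simp [liminf_const]
    exact absurd (hle.trans hliminf_le) (not_le.mpr hy)
end

section
/- Let r ≥ 0, let f₀ and fₙ (n ∈ ℕ) be Borel probability measures on ℝ with finite first moment such that W₁(fₙ, f₀) → 0, and let Fₙ be Borel probability measures on ℝ with W₁(Fₙ, fₙ) ≤ r for every n. Then there exist a subsequence (F_{n_k}) and a Borel probability measure F₀ on ℝ with W₁(F₀, f₀) ≤ r such that F_{n_k} → F₀ weakly. -/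
open MeasureTheory Filter Topology Set
open scoped ENNReal

/-- Wasserstein-1 distance via the Kantorovich–Rubinstein dual formula, the supremum
over bounded 1-Lipschitz test functions being taken in `[0,∞]`. -/
noncomputable def W1e (μ ν : Measure ℝ) : ℝ≥0∞ :=
  ⨆ f ∈ {f : ℝ → ℝ | LipschitzWith 1 f ∧ ∃ C, ∀ x, |f x| ≤ C},
    ENNReal.ofReal ((∫ x, f x ∂μ) - ∫ x, f x ∂ν)

/-!
Testing the Wasserstein bound against the truncations `min |x| L` and applying Markov's inequality
gives `Fₙ {L < |x|} ≤ (∫ |x| df₀ + r + 1) / L` for all large `n`, so `(Fₙ)` is tight, and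
Prokhorov's theorem together with the metrizability of weak convergence yields a weakly convergent
subsequence. Each test integral is continuous for weak convergence, so `W₁(·, f₀)` is weakly lower
semicontinuous, and `W₁(F_{n_k}, f₀) ≤ r + W₁(f_{n_k}, f₀) → r` passes to the limit.
-/

section W1e

variable {μ ν : Measure ℝ} {f : ℝ → ℝ}

lemma ofReal_integral_sub_le_W1e (hf : LipschitzWith 1 f) (hfb : ∃ C, ∀ x, |f x| ≤ C) :
    ENNReal.ofReal ((∫ x, f x ∂μ) - ∫ x, f x ∂ν) ≤ W1e μ ν :=
  le_iSup₂ (f := fun f (_ : f ∈ {f : ℝ → ℝ | LipschitzWith 1 f ∧ ∃ C, ∀ x, |f x| ≤ C}) =>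
    ENNReal.ofReal ((∫ x, f x ∂μ) - ∫ x, f x ∂ν)) f ⟨hf, hfb⟩

lemma integral_sub_integral_le_of_W1e_le {c : ℝ≥0∞} (hc : c ≠ ∞) (h : W1e μ ν ≤ c)
    (hf : LipschitzWith 1 f) (hfb : ∃ C, ∀ x, |f x| ≤ C) :
    (∫ x, f x ∂μ) - ∫ x, f x ∂ν ≤ c.toReal :=
  (ENNReal.ofReal_le_iff_le_toReal hc).1 ((ofReal_integral_sub_le_W1e hf hfb).trans h)

lemma W1e_triangle (μ ν ρ : Measure ℝ) : W1e μ ρ ≤ W1e μ ν + W1e ν ρ := by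
  refine iSup₂_le fun f ⟨hf, hfb⟩ => ?_
  calc ENNReal.ofReal ((∫ x, f x ∂μ) - ∫ x, f x ∂ρ)
      = ENNReal.ofReal (((∫ x, f x ∂μ) - ∫ x, f x ∂ν) + ((∫ x, f x ∂ν) - ∫ x, f x ∂ρ)) := by
        ring_nf
    _ ≤ _ := ENNReal.ofReal_add_le
    _ ≤ W1e μ ν + W1e ν ρ :=
        add_le_add (ofReal_integral_sub_le_W1e hf hfb) (ofReal_integral_sub_le_W1e hf hfb)

end W1e

lemma MeasureTheory.ProbabilityMeasure.tendsto_integral_of_tendsto {E ι : Type*}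
    [MeasurableSpace E] [TopologicalSpace E] [OpensMeasurableSpace E] {l : Filter ι}
    {μ : ι → ProbabilityMeasure E}
    {μ₀ : ProbabilityMeasure E} (hμ : Tendsto μ l (𝓝 μ₀)) {g : E → ℝ} (hg : Continuous g)
    {C : ℝ} (hC : ∀ x, |g x| ≤ C) :
    Tendsto (fun i => ∫ x, g x ∂(μ i : Measure E)) l (𝓝 (∫ x, g x ∂(μ₀ : Measure E))) :=
  ProbabilityMeasure.tendsto_iff_forall_integral_tendsto.1 hμ
    (.ofNormedAddCommGroup g hg C fun x => by simpa only [Real.norm_eq_abs] using hC x)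

lemma W1e_le_of_tendsto {ι : Type*} {l : Filter ι} [l.NeBot] {μ : ι → ProbabilityMeasure ℝ}
    {μ₀ : ProbabilityMeasure ℝ} (hμ : Tendsto μ l (𝓝 μ₀)) (ν : Measure ℝ) {c : ι → ℝ≥0∞}
    {c₀ : ℝ≥0∞} (hc : Tendsto c l (𝓝 c₀)) (h : ∀ i, W1e (μ i) ν ≤ c i) : W1e μ₀ ν ≤ c₀ := by
  refine iSup₂_le fun f ⟨hf, C, hC⟩ => le_of_tendsto_of_tendsto' ?_ hc fun i =>
    (ofReal_integral_sub_le_W1e hf ⟨C, hC⟩).trans (h i)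
  exact ENNReal.tendsto_ofReal
    ((ProbabilityMeasure.tendsto_integral_of_tendsto hμ hf.continuous hC).sub_const _)

lemma isTightMeasureSet_range_of_eventually_measure_norm_gt_le {E : Type*}
    [NormedAddCommGroup E] [MeasurableSpace E] [BorelSpace E] [ProperSpace E]
    {μ : ℕ → Measure E} [∀ n, IsFiniteMeasure (μ n)] {b : ℝ → ℝ≥0∞}
    (hb : Tendsto b atTop (𝓝 0)) (h : ∀ᶠ R in atTop, ∀ᶠ n in atTop, μ n {x | R < ‖x‖} ≤ b R) :
    IsTightMeasureSet (range μ) := by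
  refine isTightMeasureSet_range_of_tendsto_limsup_measure_norm_gt
    (tendsto_of_tendsto_of_tendsto_of_le_of_le' tendsto_const_nhds hb
      (Eventually.of_forall fun _ => bot_le) ?_)
  filter_upwards [h] with R hR using limsup_le_of_le (h := hR)

lemma mul_measureReal_abs_gt_le_integral_min_abs (μ : Measure ℝ) [IsFiniteMeasure μ] {L : ℝ}
    (hL : 0 ≤ L) : L * μ.real {x | L < |x|} ≤ ∫ x, min |x| L ∂μ := by
  have hint : Integrable (fun x : ℝ => min |x| L) μ :=
    .of_bound (by fun_prop) L (ae_of_all _ fun x => by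
      rw [Real.norm_eq_abs, abs_of_nonneg (le_min (abs_nonneg x) hL)]; exact min_le_right _ _)
  calc L * μ.real {x | L < |x|} ≤ L * μ.real {x | L ≤ min |x| L} :=
        mul_le_mul_of_nonneg_left (measureReal_mono fun x (hx : L < |x|) =>
          show L ≤ min |x| L from le_min hx.le le_rfl) hL
    _ ≤ ∫ x, min |x| L ∂μ :=
        mul_meas_ge_le_integral_of_nonneg (ae_of_all _ fun x => le_min (abs_nonneg x) hL) hint L

lemma measure_abs_gt_le_of_W1e_le {μ ν : Measure ℝ} [IsFiniteMeasure μ] [IsFiniteMeasure ν]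
    (hν : Integrable id ν) {c : ℝ≥0∞} (hc : c ≠ ∞) (h : W1e μ ν ≤ c) {L : ℝ} (hL : 0 < L) :
    μ {x | L < |x|} ≤ ENNReal.ofReal (((∫ x, |x| ∂ν) + c.toReal) / L) := by
  have hlip : LipschitzWith 1 fun x : ℝ => min |x| L :=
    (lipschitzWith_one_norm (E := ℝ)).min_const L
  have hbdd (x : ℝ) : |min |x| L| ≤ L := by
    rw [abs_of_nonneg (le_min (abs_nonneg x) hL.le)]; exact min_le_right _ _
  have hmarkov : L * μ.real {x | L < |x|} ≤ (∫ x, |x| ∂ν) + c.toReal :=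
    calc L * μ.real {x | L < |x|} ≤ ∫ x, min |x| L ∂μ :=
          mul_measureReal_abs_gt_le_integral_min_abs μ hL.le
      _ ≤ (∫ x, min |x| L ∂ν) + c.toReal := by
          linarith [integral_sub_integral_le_of_W1e_le hc h hlip ⟨L, hbdd⟩]
      _ ≤ (∫ x, |x| ∂ν) + c.toReal := by
          gcongr ?_ + _
          exact integral_mono (.of_bound (by fun_prop) L (ae_of_all _ hbdd)) hν.abs
            fun x => min_le_left |x| L
  rw [← ofReal_measureReal]
  exact ENNReal.ofReal_le_ofReal ((le_div_iff₀ hL).2 (by linarith))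

lemma isTightMeasureSet_range_of_eventually_W1e_le {μ : ℕ → Measure ℝ}
    [∀ n, IsFiniteMeasure (μ n)] {ν : Measure ℝ} [IsFiniteMeasure ν]
    (hν : Integrable id ν) {c : ℝ≥0∞} (hc : c ≠ ∞) (h : ∀ᶠ n in atTop, W1e (μ n) ν ≤ c) :
    IsTightMeasureSet (range μ) := by
  refine isTightMeasureSet_range_of_eventually_measure_norm_gt_le
    (b := fun L => ENNReal.ofReal (((∫ x, |x| ∂ν) + c.toReal) / L)) ?_ ?_
  · simpa using ENNReal.tendsto_ofReal (tendsto_const_nhds.div_atTop tendsto_id)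
  · filter_upwards [eventually_gt_atTop 0] with L hL
    filter_upwards [h] with n hn
    simpa only [Real.norm_eq_abs] using measure_abs_gt_le_of_W1e_le hν hc hn hL

lemma MeasureTheory.ProbabilityMeasure.exists_tendsto_subseq_of_isTightMeasureSet {E : Type*}
    [TopologicalSpace E] [TopologicalSpace.MetrizableSpace E] [TopologicalSpace.SeparableSpace E]
    [MeasurableSpace E] [BorelSpace E] {μ : ℕ → ProbabilityMeasure E}
    (h : IsTightMeasureSet (range fun n => (μ n : Measure E))) :
    ∃ μ₀ : ProbabilityMeasure E, ∃ φ : ℕ → ℕ, StrictMono φ ∧ Tendsto (μ ∘ φ) atTop (𝓝 μ₀) := by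
  have hcompact : IsCompact (closure (range μ)) :=
    isCompact_closure_of_isTightMeasureSet (by simp only [exists_range_iff]; exact h)
  obtain ⟨μ₀, -, φ, hφ, hlim⟩ :=
    hcompact.tendsto_subseq fun n => subset_closure (mem_range_self n)
  exact ⟨μ₀, φ, hφ, hlim⟩

theorem subseq_weak_limit_of_moving_wasserstein_balls_general (r : ℝ)
    (fn : ℕ → Measure ℝ) (f0 : Measure ℝ)
    [∀ n, IsProbabilityMeasure (fn n)] [IsProbabilityMeasure f0]
    (hf0 : Integrable id f0)
    (hconv : Tendsto (fun n => W1e (fn n) f0) atTop (nhds 0))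
    (Fn : ℕ → Measure ℝ) [∀ n, IsProbabilityMeasure (Fn n)]
    (hFn : ∀ n, W1e (Fn n) (fn n) ≤ ENNReal.ofReal r) :
    ∃ φ : ℕ → ℕ, StrictMono φ ∧ ∃ F0 : Measure ℝ, IsProbabilityMeasure F0 ∧
      W1e F0 f0 ≤ ENNReal.ofReal r ∧
      ∀ g : ℝ → ℝ, Continuous g → (∃ C, ∀ x, |g x| ≤ C) →
        Tendsto (fun k => ∫ x, g x ∂(Fn (φ k))) atTop (nhds (∫ x, g x ∂F0)) := by
  have hW1 n : W1e (Fn n) f0 ≤ ENNReal.ofReal r + W1e (fn n) f0 :=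
    (W1e_triangle _ (fn n) _).trans (add_le_add_left (hFn n) _)
  have hbound : Tendsto (fun n => ENNReal.ofReal r + W1e (fn n) f0) atTop
      (𝓝 (ENNReal.ofReal r)) := by
    simpa using tendsto_const_nhds.add hconv
  have htight : IsTightMeasureSet (range Fn) := by
    refine isTightMeasureSet_range_of_eventually_W1e_le hf0 (c := ENNReal.ofReal r + 1)
      (by simp) ?_
    filter_upwards [hconv.eventually (Iic_mem_nhds zero_lt_one)] with n hn
    exact (hW1 n).trans (add_le_add_right hn _)
  let F n : ProbabilityMeasure ℝ := ⟨Fn n, inferInstance⟩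
  obtain ⟨F0, φ, hφ, hlim⟩ := ProbabilityMeasure.exists_tendsto_subseq_of_isTightMeasureSet
    (μ := F) htight
  exact ⟨φ, hφ, F0, inferInstance, W1e_le_of_tendsto hlim f0 (hbound.comp hφ.tendsto_atTop)
    (fun k => hW1 (φ k)), fun g hg ⟨C, hC⟩ =>
      ProbabilityMeasure.tendsto_integral_of_tendsto hlim hg hC⟩

theorem subseq_weak_limit_of_moving_wasserstein_balls (r : ℝ) (hr : 0 ≤ r)
    (fn : ℕ → Measure ℝ) (f0 : Measure ℝ)
    [∀ n, IsProbabilityMeasure (fn n)] [IsProbabilityMeasure f0]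
    (hfn : ∀ n, Integrable id (fn n)) (hf0 : Integrable id f0)
    (hconv : Tendsto (fun n => W1e (fn n) f0) atTop (nhds 0))
    (Fn : ℕ → Measure ℝ) [∀ n, IsProbabilityMeasure (Fn n)]
    (hFn : ∀ n, W1e (Fn n) (fn n) ≤ ENNReal.ofReal r) :
    ∃ φ : ℕ → ℕ, StrictMono φ ∧ ∃ F0 : Measure ℝ, IsProbabilityMeasure F0 ∧
      W1e F0 f0 ≤ ENNReal.ofReal r ∧
      ∀ g : ℝ → ℝ, Continuous g → (∃ C, ∀ x, |g x| ≤ C) →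
        Tendsto (fun k => ∫ x, g x ∂(Fn (φ k))) atTop (nhds (∫ x, g x ∂F0)) :=
  subseq_weak_limit_of_moving_wasserstein_balls_general r fn f0 hf0 hconv Fn hFn
end
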